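/- arXiv:1812.10342 — 3 statements merged into one kernel-verified Lean document; each statement's English description precedes it below -/
import Mathlib

section
/- Suppose that T : E_1 → E_2 is 2-local in G_Π(E_1,E_2) ∩ Iso(E_1,E_2). Then there exist ε ∈ {1,−1} and α ∈ ℂ with |α| = 1 such that for every f ∈ W_1 there exists a homeomorphism π_f ∈ Π with T(f) = T(0) + α·[f∘π_f]^ε. -/
/-!
Subtracting `T 0`, each `T f` has the form `α_f [f ∘ π_f]^{ε_f}`. For `f ∈ W₁` and a constant `c`,
2-locality at the pair `(f, c)` exhibits `z ↦ α_f [z]^{ε_f}` and some `z ↦ d + β [z]^δ` as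
isometries of `ℂ` carrying the range of `f` onto the same set; since that range admits no
non-trivial self-isometry, the two maps coincide, and evaluating them at `c` gives
`T c - T 0 = α_f [c]^{ε_f}`. Thus the map `c ↦ α_f [c]^{ε_f}` does not depend on `f ∈ W₁`.
-/

/-- `[f]^ε`: the function itself if `ε = 1`, its pointwise complex conjugate otherwise. -/
noncomputable def epow {X : Type*} [TopologicalSpace X] (ε : ℤ) (f : C(X, ℂ)) : C(X, ℂ) :=
  if ε = 1 then f else star f

/-- The set `W` of elements `f` of a subspace `E` of `C(X)` such that the only isometry of `ℂ`
leaving the range of `f` invariant is the identity. -/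
def Wset {X : Type*} [TopologicalSpace X] (E : Submodule ℂ C(X, ℂ)) : Set E :=
  {f | ∀ S : ℂ → ℂ, Isometry S →
    S '' Set.range ⇑(f : C(X, ℂ)) = Set.range ⇑(f : C(X, ℂ)) → S = id}

open Set Function

section IsometryRigid

variable {M : Type*} [PseudoMetricSpace M]

/-- `f ∈ Wset E` unfolds to `IsometryRigid (range f)`. -/
def IsometryRigid (s : Set M) : Prop :=
  ∀ S : M → M, Isometry S → S '' s = s → S = id

theorem IsometryRigid.eq_of_image_eq {s : Set M} (hs : IsometryRigid s) {φ ψ : M ≃ᵢ M}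
    (h : φ '' s = ψ '' s) : φ = ψ := by
  have hS : ψ.symm ∘ φ = id :=
    hs _ (ψ.symm.isometry.comp φ.isometry) (by rw [image_comp, h, image_image]; simp)
  ext z
  simpa using congrArg ψ (congrFun hS z)

theorem IsometryRigid.eq_of_comp_eq {X Y : Type*} {f : X → M} (hf : IsometryRigid (range f))
    {σ τ : Y ≃ X} {φ ψ : M ≃ᵢ M} (h : ∀ y, φ (f (σ y)) = ψ (f (τ y))) : φ = ψ := by
  refine hf.eq_of_image_eq ?_
  rw [← range_comp, ← range_comp, ← σ.surjective.range_comp, ← τ.surjective.range_comp]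
  exact congrArg range (funext h)

end IsometryRigid

section Twist

noncomputable def twist (α : ℂ) (ε : ℤ) (z : ℂ) : ℂ := α * if ε = 1 then z else star z

variable {α : ℂ} {ε : ℤ}

@[simp]
theorem twist_zero : twist α ε 0 = 0 := by
  simp [twist]

theorem smul_epow_apply {X : Type*} [TopologicalSpace X] (α : ℂ) (ε : ℤ) (f : C(X, ℂ)) (x : X) :
    (α • epow ε f) x = twist α ε (f x) := by
  unfold epow twist
  split_ifs <;> rfl

theorem isometry_twist (hα : ‖α‖ = 1) : Isometry (twist α ε) := by
  refine Isometry.of_dist_eq fun z w => ?_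
  simp only [twist, dist_eq_norm, ← mul_sub, norm_mul, hα, one_mul]
  split_ifs
  · rfl
  · rw [← star_sub, norm_star]

theorem twist_twist_one_inv_mul (hα : α ≠ 0) (w : ℂ) : twist α ε (twist 1 ε (α⁻¹ * w)) = w := by
  unfold twist
  split_ifs <;> simp [hα]

noncomputable def twistEquiv (hα : ‖α‖ = 1) : ℂ ≃ᵢ ℂ :=
  IsometryEquiv.mk' (twist α ε) (fun w => twist 1 ε (α⁻¹ * w))
    (twist_twist_one_inv_mul (norm_ne_zero_iff.mp (hα ▸ one_ne_zero))) (isometry_twist hα)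

@[simp]
theorem twistEquiv_apply (hα : ‖α‖ = 1) (z : ℂ) : twistEquiv (ε := ε) hα z = twist α ε z := rfl

end Twist

section TwoLocal

variable {X Y : Type*} [TopologicalSpace X] [TopologicalSpace Y] {E : Submodule ℂ C(X, ℂ)}
  {PP : Set (Y ≃ₜ X)} {T : E → Y → ℂ}

def IsTwoLocalTwist (PP : Set (Y ≃ₜ X)) (T : E → Y → ℂ) : Prop :=
  ∀ f g : E, ∃ lam : Y → ℂ, ∃ α : ℂ, ‖α‖ = 1 ∧ ∃ π ∈ PP, ∃ ε ∈ ({1, -1} : Set ℤ), ∀ y,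
    T f y = lam y + twist α ε ((f : C(X, ℂ)) (π y)) ∧
      T g y = lam y + twist α ε ((g : C(X, ℂ)) (π y))

theorem IsTwoLocalTwist.exists_eq_apply_zero_add (hT : IsTwoLocalTwist PP T) (f : E) :
    ∃ α : ℂ, ‖α‖ = 1 ∧ ∃ π ∈ PP, ∃ ε ∈ ({1, -1} : Set ℤ), ∀ y,
      T f y = T 0 y + twist α ε ((f : C(X, ℂ)) (π y)) := by
  obtain ⟨lam, α, hα, π, hπ, ε, hε, hpair⟩ := hT f 0
  refine ⟨α, hα, π, hπ, ε, hε, fun y => ?_⟩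
  simp [(hpair y).1, (hpair y).2]

theorem IsTwoLocalTwist.apply_const_eq (hT : IsTwoLocalTwist PP T)
    (hconst : ∀ c : ℂ, ContinuousMap.const X c ∈ E) {f : E}
    (hf : IsometryRigid (range (f : C(X, ℂ)))) {α : ℂ} {ε : ℤ} {π : Y ≃ₜ X} (hα : ‖α‖ = 1)
    (hf_eq : ∀ y, T f y = T 0 y + twist α ε ((f : C(X, ℂ)) (π y))) (c : ℂ) (y : Y) :
    T ⟨_, hconst c⟩ y = T 0 y + twist α ε c := by
  obtain ⟨α', -, _, -, ε', -, hc_eq⟩ := hT.exists_eq_apply_zero_add ⟨_, hconst c⟩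
  obtain ⟨lam, β, hβ, σ, -, δ, -, hpair⟩ := hT f ⟨_, hconst c⟩
  set d := twist α' ε' c - twist β δ c
  have hcomp : ∀ z, twist α ε ((f : C(X, ℂ)) (π z)) = d + twist β δ ((f : C(X, ℂ)) (σ z)) := by
    intro z
    have := (hpair z).2
    simp only [hc_eq, ContinuousMap.const_apply] at this
    linear_combination (hpair z).1 - hf_eq z - this
  have hφψ : twistEquiv (ε := ε) hα = (twistEquiv (ε := δ) hβ).trans (IsometryEquiv.addLeft d) :=
    hf.eq_of_comp_eq (σ := π.toEquiv) (τ := σ.toEquiv) fun z => by simpa using hcomp z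
  have hc := congrArg (· c) hφψ
  simp only [twistEquiv_apply, IsometryEquiv.trans_apply, IsometryEquiv.addLeft_apply] at hc
  rw [hc_eq, ContinuousMap.const_apply, hc]
  ring

end TwoLocal

theorem stmt_1_general
    {X1 X2 : Type*} [TopologicalSpace X1]
    [TopologicalSpace X2]
    (E1 : Submodule ℂ C(X1, ℂ)) (E2 : Submodule ℂ C(X2, ℂ))
    -- `E_j` contains the constants
    (hconst1 : ∀ c : ℂ, ContinuousMap.const X1 c ∈ E1)
    -- the norms on `E_j`
    (N1 : C(X1, ℂ) → ℝ) (N2 : C(X2, ℂ) → ℝ)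
    -- a nonempty set of homeomorphisms from `X₂` onto `X₁`
    (PP : Set (X2 ≃ₜ X1))
    (T : E1 → E2)
    -- `T` is 2-local in `G_Π(E₁,E₂) ∩ Iso(E₁,E₂)`
    (h2loc : ∀ f g : E1, ∃ S : E1 → E2,
      ((∃ lam : E2, ∃ α : ℂ, ‖α‖ = 1 ∧ ∃ π ∈ PP, ∃ ε ∈ ({1, -1} : Set ℤ),
          ∀ h : E1, (S h : C(X2, ℂ)) =
            (lam : C(X2, ℂ)) + α • epow ε ((h : C(X1, ℂ)).comp (π : C(X2, X1)))) ∧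
        (Function.Surjective S ∧
          ∀ u v : E1, N2 ((S u : C(X2, ℂ)) - (S v : C(X2, ℂ)))
            = N1 ((u : C(X1, ℂ)) - (v : C(X1, ℂ))))) ∧
      T f = S f ∧ T g = S g) :
    ∃ ε ∈ ({1, -1} : Set ℤ), ∃ α : ℂ, ‖α‖ = 1 ∧
      ∀ f ∈ Wset E1, ∃ π ∈ PP,
        (T f : C(X2, ℂ)) =
          (T 0 : C(X2, ℂ)) + α • epow ε ((f : C(X1, ℂ)).comp (π : C(X2, X1))) := by
  have hT : IsTwoLocalTwist PP fun f => ⇑(T f : C(X2, ℂ)) := by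
    intro f g
    obtain ⟨S, ⟨⟨lam, α, hα, π, hπ, ε, hε, hS⟩, -⟩, hf, hg⟩ := h2loc f g
    refine ⟨lam, α, hα, π, hπ, ε, hε, fun y => ?_⟩
    simp only [hf, hg, hS, ContinuousMap.add_apply, smul_epow_apply]
    exact ⟨rfl, rfl⟩
  rcases (Wset E1).eq_empty_or_nonempty with hW | ⟨f₀, hf₀⟩
  · exact ⟨1, by simp, 1, norm_one, by simp [hW]⟩
  obtain ⟨α₀, hα₀, _, -, ε₀, hε₀, hf₀_eq⟩ := hT.exists_eq_apply_zero_add f₀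
  refine ⟨ε₀, hε₀, α₀, hα₀, fun f hf => ?_⟩
  obtain ⟨α, hα, π, hπ, ε, -, hf_eq⟩ := hT.exists_eq_apply_zero_add f
  refine ⟨π, hπ, ContinuousMap.ext fun y => ?_⟩
  rw [ContinuousMap.add_apply, smul_epow_apply, hf_eq, ← hT.apply_const_eq hconst1 hf hα hf_eq,
    hT.apply_const_eq hconst1 hf₀ hα₀ hf₀_eq]
  rfl

/-- if `T` is 2-local in `G_Π(E₁,E₂) ∩ Iso(E₁,E₂)`, then there are `ε ∈ {1,-1}` and
a unimodular `α ∈ ℂ` such that for every `f ∈ W₁` there is `π_f ∈ Π` with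
`T(f) = T(0) + α·[f ∘ π_f]^ε`. -/
theorem stmt_1
    {X1 X2 : Type*} [TopologicalSpace X1] [CompactSpace X1] [T2Space X1]
    [TopologicalSpace X2] [CompactSpace X2] [T2Space X2]
    (E1 : Submodule ℂ C(X1, ℂ)) (E2 : Submodule ℂ C(X2, ℂ))
    -- `E_j` contains the constants
    (hconst1 : ∀ c : ℂ, ContinuousMap.const X1 c ∈ E1)
    (hconst2 : ∀ c : ℂ, ContinuousMap.const X2 c ∈ E2)
    -- `E_j` separates the points
    (hsep1 : ∀ x y : X1, x ≠ y → ∃ f ∈ E1, f x ≠ f y)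
    (hsep2 : ∀ x y : X2, x ≠ y → ∃ f ∈ E2, f x ≠ f y)
    -- `E_j` is conjugate closed
    (hstar1 : ∀ f ∈ E1, star f ∈ E1)
    (hstar2 : ∀ f ∈ E2, star f ∈ E2)
    -- the norms on `E_j`
    (N1 : C(X1, ℂ) → ℝ) (N2 : C(X2, ℂ) → ℝ)
    (hN1add : ∀ f ∈ E1, ∀ g ∈ E1, N1 (f + g) ≤ N1 f + N1 g)
    (hN1smul : ∀ (c : ℂ), ∀ f ∈ E1, N1 (c • f) = ‖c‖ * N1 f)
    (hN1eq0 : ∀ f ∈ E1, (N1 f = 0 ↔ f = 0))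
    (hN1const : ∀ c : ℂ, N1 (ContinuousMap.const X1 c) = ‖c‖)
    (hN1star : ∀ f ∈ E1, N1 (star f) = N1 f)
    (hN2add : ∀ f ∈ E2, ∀ g ∈ E2, N2 (f + g) ≤ N2 f + N2 g)
    (hN2smul : ∀ (c : ℂ), ∀ f ∈ E2, N2 (c • f) = ‖c‖ * N2 f)
    (hN2eq0 : ∀ f ∈ E2, (N2 f = 0 ↔ f = 0))
    (hN2const : ∀ c : ℂ, N2 (ContinuousMap.const X2 c) = ‖c‖)
    (hN2star : ∀ f ∈ E2, N2 (star f) = N2 f)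
    -- a nonempty set of homeomorphisms from `X₂` onto `X₁`
    (PP : Set (X2 ≃ₜ X1)) (hPP : PP.Nonempty)
    (T : E1 → E2)
    -- `T` is 2-local in `G_Π(E₁,E₂) ∩ Iso(E₁,E₂)`
    (h2loc : ∀ f g : E1, ∃ S : E1 → E2,
      ((∃ lam : E2, ∃ α : ℂ, ‖α‖ = 1 ∧ ∃ π ∈ PP, ∃ ε ∈ ({1, -1} : Set ℤ),
          ∀ h : E1, (S h : C(X2, ℂ)) =
            (lam : C(X2, ℂ)) + α • epow ε ((h : C(X1, ℂ)).comp (π : C(X2, X1)))) ∧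
        (Function.Surjective S ∧
          ∀ u v : E1, N2 ((S u : C(X2, ℂ)) - (S v : C(X2, ℂ)))
            = N1 ((u : C(X1, ℂ)) - (v : C(X1, ℂ))))) ∧
      T f = S f ∧ T g = S g) :
    ∃ ε ∈ ({1, -1} : Set ℤ), ∃ α : ℂ, ‖α‖ = 1 ∧
      ∀ f ∈ Wset E1, ∃ π ∈ PP,
        (T f : C(X2, ℂ)) =
          (T 0 : C(X2, ℂ)) + α • epow ε ((f : C(X1, ℂ)).comp (π : C(X2, X1))) :=
  stmt_1_general E1 E2 hconst1 N1 N2 PP T h2loc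
end

section
/- Suppose that T : E_1 → E_2 is 2-local in G_Π(E_1,E_2) ∩ Iso(E_1,E_2) and T(0) = 0. Then T maps every constant function in E_1 to a constant function in E_2, and there exists α ∈ ℂ with |α| = 1 such that either T(c) = α·c for every constant c ∈ ℂ, or T(c) = α·conj(c) for every constant c ∈ ℂ (where a complex number c is identified with the corresponding constant function). -/
open ComplexConjugate

theorem exists_eq_mul_or_eq_mul_conj_of_isometry {φ : ℂ → ℂ} (hφ : Isometry φ) (h0 : φ 0 = 0) :
    ∃ α : ℂ, ‖α‖ = 1 ∧ ((∀ c, φ c = α * c) ∨ ∀ c, φ c = α * conj c) := by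
  let L := hφ.affineIsometryOfStrictConvexSpace.linearIsometry
  have hL : ∀ c, φ c = L c := fun c => by
    simpa [h0] using hφ.affineIsometryOfStrictConvexSpace.map_vadd 0 c
  obtain ⟨a, ha | ha⟩ := linear_isometry_complex (L.toLinearIsometryEquiv rfl)
  · refine ⟨(a : ℂ), Circle.norm_coe a, Or.inl fun c => ?_⟩
    rw [hL, ← L.toLinearIsometryEquiv_apply rfl, ha, rotation_apply]
  · refine ⟨(a : ℂ), Circle.norm_coe a, Or.inr fun c => ?_⟩
    rw [hL, ← L.toLinearIsometryEquiv_apply rfl, ha, LinearIsometryEquiv.trans_apply,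
      rotation_apply, Complex.conjLIE_apply]

lemma epow_const {X : Type*} [TopologicalSpace X] (ε : ℤ) (c : ℂ) :
    epow ε (ContinuousMap.const X c) = ContinuousMap.const X (if ε = 1 then c else conj c) := by
  unfold epow
  split_ifs <;> rfl

lemma exists_norm_eq_and_sub_eq_const {X1 X2 : Type*} [TopologicalSpace X1] [TopologicalSpace X2]
    (lam : C(X2, ℂ)) {α : ℂ} (hα : ‖α‖ = 1) (π : C(X2, X1)) (ε : ℤ) (c c' : ℂ) :
    ∃ d : ℂ, ‖d‖ = ‖c - c'‖ ∧
      (lam + α • epow ε ((ContinuousMap.const X1 c).comp π))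
        - (lam + α • epow ε ((ContinuousMap.const X1 c').comp π)) = ContinuousMap.const X2 d := by
  simp only [ContinuousMap.const_comp, epow_const, add_sub_add_left_eq_sub]
  split_ifs
  · exact ⟨α * (c - c'), by rw [norm_mul, hα, one_mul], by ext; simp [mul_sub]⟩
  · exact ⟨α * conj (c - c'), by rw [norm_mul, hα, one_mul, Complex.norm_conj],
      by ext; simp [mul_sub]⟩

lemma exists_eq_const_mul_or_eq_const_mul_conj {X : Type*} [TopologicalSpace X]
    {F : ℂ → C(X, ℂ)} (h0 : F 0 = 0)
    (hF : ∀ c c' : ℂ, ∃ d : ℂ, ‖d‖ = ‖c - c'‖ ∧ F c - F c' = ContinuousMap.const X d) :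
    ∃ α : ℂ, ‖α‖ = 1 ∧ ((∀ c, F c = ContinuousMap.const X (α * c)) ∨
      ∀ c, F c = ContinuousMap.const X (α * conj c)) := by
  rcases isEmpty_or_nonempty X with hX | hX
  · exact ⟨1, norm_one, Or.inl fun _ => Subsingleton.elim _ _⟩
  obtain ⟨x₀⟩ := hX
  have hF_const : ∀ c, F c = ContinuousMap.const X (F c x₀) := fun c => by
    obtain ⟨d, -, hd⟩ := hF c 0
    rw [h0, sub_zero] at hd
    rw [hd, ContinuousMap.const_apply]
  have hφ : Isometry fun c => F c x₀ := Isometry.of_dist_eq fun c c' => by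
    obtain ⟨d, hd, hcc'⟩ := hF c c'
    rw [dist_eq_norm, dist_eq_norm, ← ContinuousMap.sub_apply, hcc', ContinuousMap.const_apply, hd]
  obtain ⟨α, hα, h | h⟩ :=
    exists_eq_mul_or_eq_mul_conj_of_isometry hφ (by rw [h0, ContinuousMap.zero_apply])
  · exact ⟨α, hα, Or.inl fun c => by rw [hF_const, h]⟩
  · exact ⟨α, hα, Or.inr fun c => by rw [hF_const, h]⟩

theorem stmt_2_general
    {X1 X2 : Type*} [TopologicalSpace X1] [TopologicalSpace X2]
    (E1 : Submodule ℂ C(X1, ℂ)) (E2 : Submodule ℂ C(X2, ℂ))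
    -- `E_j` contains the constants
    (hconst1 : ∀ c : ℂ, ContinuousMap.const X1 c ∈ E1)
    -- the norms on `E_j`
    (N1 : C(X1, ℂ) → ℝ) (N2 : C(X2, ℂ) → ℝ)
    -- a nonempty set of homeomorphisms from `X₂` onto `X₁`
    (PP : Set (X2 ≃ₜ X1))
    (T : E1 → E2) (hT0 : T 0 = 0)
    -- `T` is 2-local in `G_Π(E₁,E₂) ∩ Iso(E₁,E₂)`
    (h2loc : ∀ f g : E1, ∃ S : E1 → E2,
      ((∃ lam : E2, ∃ α : ℂ, ‖α‖ = 1 ∧ ∃ π ∈ PP, ∃ ε ∈ ({1, -1} : Set ℤ),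
          ∀ h : E1, (S h : C(X2, ℂ)) =
            (lam : C(X2, ℂ)) + α • epow ε ((h : C(X1, ℂ)).comp (π : C(X2, X1)))) ∧
        (Function.Surjective S ∧
          ∀ u v : E1, N2 ((S u : C(X2, ℂ)) - (S v : C(X2, ℂ)))
            = N1 ((u : C(X1, ℂ)) - (v : C(X1, ℂ))))) ∧
      T f = S f ∧ T g = S g) :
    (∀ c : ℂ, ∃ d : ℂ,
      (T ⟨ContinuousMap.const X1 c, hconst1 c⟩ : C(X2, ℂ)) = ContinuousMap.const X2 d) ∧
    ∃ α : ℂ, ‖α‖ = 1 ∧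
      ((∀ c : ℂ, (T ⟨ContinuousMap.const X1 c, hconst1 c⟩ : C(X2, ℂ))
          = ContinuousMap.const X2 (α * c)) ∨
       (∀ c : ℂ, (T ⟨ContinuousMap.const X1 c, hconst1 c⟩ : C(X2, ℂ))
          = ContinuousMap.const X2 (α * (starRingEnd ℂ) c))) := by
  set F : ℂ → C(X2, ℂ) := fun c => T ⟨ContinuousMap.const X1 c, hconst1 c⟩
  have hF0 : F 0 = 0 := by
    have h0 : (⟨ContinuousMap.const X1 0, hconst1 0⟩ : E1) = 0 := rfl
    simp only [F, h0, hT0, Submodule.coe_zero]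
  have hF : ∀ c c' : ℂ, ∃ d : ℂ, ‖d‖ = ‖c - c'‖ ∧ F c - F c' = ContinuousMap.const X2 d := by
    intro c c'
    obtain ⟨S, ⟨⟨lam, α, hα, π, -, ε, -, hS⟩, -⟩, hTc, hTc'⟩ :=
      h2loc ⟨ContinuousMap.const X1 c, hconst1 c⟩ ⟨ContinuousMap.const X1 c', hconst1 c'⟩
    simp only [F, hTc, hTc', hS]
    exact exists_norm_eq_and_sub_eq_const lam hα (π : C(X2, X1)) ε c c'
  obtain ⟨α, hα, hα_const⟩ := exists_eq_const_mul_or_eq_const_mul_conj hF0 hF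
  refine ⟨fun c => ?_, α, hα, hα_const⟩
  rcases hα_const with h | h
  · exact ⟨_, h c⟩
  · exact ⟨_, h c⟩

/-- if `T` is 2-local in `G_Π(E₁,E₂) ∩ Iso(E₁,E₂)` and `T(0) = 0`, then `T` maps
constants to constants and there is a unimodular `α ∈ ℂ` with `T(c) = α·c` for all constants `c`
or `T(c) = α·conj(c)` for all constants `c`. -/
theorem stmt_2
    {X1 X2 : Type*} [TopologicalSpace X1] [CompactSpace X1] [T2Space X1]
    [TopologicalSpace X2] [CompactSpace X2] [T2Space X2]
    (E1 : Submodule ℂ C(X1, ℂ)) (E2 : Submodule ℂ C(X2, ℂ))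
    -- `E_j` contains the constants
    (hconst1 : ∀ c : ℂ, ContinuousMap.const X1 c ∈ E1)
    (hconst2 : ∀ c : ℂ, ContinuousMap.const X2 c ∈ E2)
    -- `E_j` separates the points
    (hsep1 : ∀ x y : X1, x ≠ y → ∃ f ∈ E1, f x ≠ f y)
    (hsep2 : ∀ x y : X2, x ≠ y → ∃ f ∈ E2, f x ≠ f y)
    -- `E_j` is conjugate closed
    (hstar1 : ∀ f ∈ E1, star f ∈ E1)
    (hstar2 : ∀ f ∈ E2, star f ∈ E2)
    -- the norms on `E_j`
    (N1 : C(X1, ℂ) → ℝ) (N2 : C(X2, ℂ) → ℝ)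
    (hN1add : ∀ f ∈ E1, ∀ g ∈ E1, N1 (f + g) ≤ N1 f + N1 g)
    (hN1smul : ∀ (c : ℂ), ∀ f ∈ E1, N1 (c • f) = ‖c‖ * N1 f)
    (hN1eq0 : ∀ f ∈ E1, (N1 f = 0 ↔ f = 0))
    (hN1const : ∀ c : ℂ, N1 (ContinuousMap.const X1 c) = ‖c‖)
    (hN1star : ∀ f ∈ E1, N1 (star f) = N1 f)
    (hN2add : ∀ f ∈ E2, ∀ g ∈ E2, N2 (f + g) ≤ N2 f + N2 g)
    (hN2smul : ∀ (c : ℂ), ∀ f ∈ E2, N2 (c • f) = ‖c‖ * N2 f)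
    (hN2eq0 : ∀ f ∈ E2, (N2 f = 0 ↔ f = 0))
    (hN2const : ∀ c : ℂ, N2 (ContinuousMap.const X2 c) = ‖c‖)
    (hN2star : ∀ f ∈ E2, N2 (star f) = N2 f)
    -- a nonempty set of homeomorphisms from `X₂` onto `X₁`
    (PP : Set (X2 ≃ₜ X1)) (hPP : PP.Nonempty)
    (T : E1 → E2) (hT0 : T 0 = 0)
    -- `T` is 2-local in `G_Π(E₁,E₂) ∩ Iso(E₁,E₂)`
    (h2loc : ∀ f g : E1, ∃ S : E1 → E2,
      ((∃ lam : E2, ∃ α : ℂ, ‖α‖ = 1 ∧ ∃ π ∈ PP, ∃ ε ∈ ({1, -1} : Set ℤ),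
          ∀ h : E1, (S h : C(X2, ℂ)) =
            (lam : C(X2, ℂ)) + α • epow ε ((h : C(X1, ℂ)).comp (π : C(X2, X1)))) ∧
        (Function.Surjective S ∧
          ∀ u v : E1, N2 ((S u : C(X2, ℂ)) - (S v : C(X2, ℂ)))
            = N1 ((u : C(X1, ℂ)) - (v : C(X1, ℂ))))) ∧
      T f = S f ∧ T g = S g) :
    (∀ c : ℂ, ∃ d : ℂ,
      (T ⟨ContinuousMap.const X1 c, hconst1 c⟩ : C(X2, ℂ)) = ContinuousMap.const X2 d) ∧
    ∃ α : ℂ, ‖α‖ = 1 ∧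
      ((∀ c : ℂ, (T ⟨ContinuousMap.const X1 c, hconst1 c⟩ : C(X2, ℂ))
          = ContinuousMap.const X2 (α * c)) ∨
       (∀ c : ℂ, (T ⟨ContinuousMap.const X1 c, hconst1 c⟩ : C(X2, ℂ))
          = ContinuousMap.const X2 (α * (starRingEnd ℂ) c))) :=
  stmt_2_general E1 E2 hconst1 N1 N2 PP T hT0 h2loc
end

section
/- G_{Π_0}(A_1,A_2) ∩ Iso(A_1,A_2) is 2-local reflexive in the set of all maps from A_1 to A_2: every map T : A_1 → A_2 that is 2-local in G_{Π_0}(A_1,A_2) ∩ Iso(A_1,A_2) belongs to G_{Π_0}(A_1,A_2) ∩ Iso(A_1,A_2); in particular T is a surjective isometry and has the form T(f) = T(0) + α·[f∘π]^ε (f ∈ A_1) for some α ∈ ℂ with |α| = 1, π ∈ Π_0 and ε ∈ {1,−1}. -/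
/-- `f ∈ C([0,1])` is continuously differentiable on `[0,1]`. -/
def IsC1 (f : C(unitInterval, ℂ)) : Prop :=
  ∃ g : ℝ → ℂ, ContDiffOn ℝ 1 g (Set.Icc 0 1) ∧ ∀ t : unitInterval, f t = g t

/-- `Π₀ = {π₀, π₁}` where `π₀` is the identity of `[0,1]` and `π₁(t) = 1 - t`. -/
noncomputable def Pi0 : Set (unitInterval ≃ₜ unitInterval) :=
  {Homeomorph.refl unitInterval, unitInterval.symmHomeomorph}

open Complex ComplexConjugate Function

theorem eq_smul_of_norm_eq_of_norm_sub_eq {E : Type*} [NormedAddCommGroup E]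
    [InnerProductSpace ℝ E] {u v : E} {t : ℝ} (hv : ‖v‖ = |t| * ‖u‖)
    (hvu : ‖v - u‖ = |t - 1| * ‖u‖) : v = t • u := by
  have hsq : ‖v - u‖ ^ 2 = (t - 1) ^ 2 * ‖u‖ ^ 2 := by rw [hvu, mul_pow, sq_abs]
  rw [norm_sub_sq_real, hv, mul_pow, sq_abs] at hsq
  have hzero : ‖v - t • u‖ ^ 2 = 0 := by
    rw [norm_sub_sq_real, hv, norm_smul, inner_smul_right, Real.norm_eq_abs, mul_pow, sq_abs]
    linear_combination t * hsq
  rwa [sq_eq_zero_iff, norm_eq_zero, sub_eq_zero] at hzero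

theorem quadratic_eq_zero_of_infinite {K : Type*} [CommRing K] [IsDomain K] {a b c : K}
    {S : Set K} (hS : S.Infinite) (h : ∀ t ∈ S, a * t ^ 2 + b * t + c = 0) :
    a = 0 ∧ b = 0 ∧ c = 0 := by
  open Polynomial in
  have hp : C a * X ^ 2 + C b * X + C c = 0 :=
    eq_zero_of_infinite_isRoot _ (hS.mono fun t ht => by simpa using h t ht)
  refine ⟨?_, ?_, ?_⟩
  · simpa using congrArg (coeff · 2) hp
  · simpa using congrArg (coeff · 1) hp
  · simpa using congrArg (coeff · 0) hp

theorem Set.Infinite.exists_infinite_setOf {α β : Type*} {S : Set α} (hS : S.Infinite)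
    {s : Set β} (hs : s.Finite) {P : β → α → Prop} (h : ∀ t ∈ S, ∃ b ∈ s, P b t) :
    ∃ b ∈ s, {t | P b t}.Infinite := by
  by_contra! hfin
  refine hS ((hs.biUnion hfin).subset fun t ht => ?_)
  obtain ⟨b, hb, hbt⟩ := h t ht
  exact Set.mem_biUnion hb hbt

theorem LinearIsometryEquiv.exists_ringHom_apply_mul_comm (L : ℂ ≃ₗᵢ[ℝ] ℂ) :
    ∃ φ ∈ ({RingHom.id ℂ, starRingEnd ℂ} : Set (ℂ →+* ℂ)), ∀ z w, L z * φ w = L w * φ z := by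
  obtain ⟨β, rfl | rfl⟩ := linear_isometry_complex L
  · refine ⟨RingHom.id ℂ, by simp, fun z w => ?_⟩
    simp only [rotation_apply, RingHom.id_apply]
    ring
  · refine ⟨starRingEnd ℂ, by simp, fun z w => ?_⟩
    simp only [LinearIsometryEquiv.trans_apply, rotation_apply, conjLIE_apply]
    ring

theorem LinearIsometryEquiv.abs_im_apply_mul_conj_apply (L : ℂ ≃ₗᵢ[ℝ] ℂ) (z w : ℂ) :
    |(L z * conj (L w)).im| = |(z * conj w).im| := by
  have hβ (β : Circle) (z w : ℂ) : β * z * conj (β * w) = z * conj w := by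
    rw [map_mul, mul_mul_mul_comm, ← Circle.coe_inv_eq_conj, ← Circle.coe_mul, mul_inv_cancel,
      Circle.coe_one, one_mul]
  obtain ⟨β, rfl | rfl⟩ := linear_isometry_complex L
  · simp only [rotation_apply, hβ]
  · simp only [LinearIsometryEquiv.trans_apply, rotation_apply, conjLIE_apply, hβ]
    rw [← map_mul, conj_im, abs_neg]

theorem RingHom.map_ofReal_of_mem {φ : ℂ →+* ℂ}
    (hφ : φ ∈ ({RingHom.id ℂ, starRingEnd ℂ} : Set (ℂ →+* ℂ))) (t : ℝ) : φ t = t := by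
  rcases hφ with rfl | rfl <;> simp

section Twist

variable {X : Type*} {σ ρ : X → X} {u v w : X → ℂ}

/-- Pointwise form of the maps `f ↦ α [f ∘ π]^ε`: the real-linear isometries of `ℂ` are exactly
the maps `z ↦ α [z]^ε` with `‖α‖ = 1`. -/
def IsTwist (σ : X → X) (u v : X → ℂ) : Prop :=
  ∃ L : ℂ ≃ₗᵢ[ℝ] ℂ, ∃ ρ ∈ ({id, σ} : Set (X → X)), ∀ x, u x = L (v (ρ x))

theorem apply_apply_of_mem_pair (hσ : Involutive σ) (hρ : ρ ∈ ({id, σ} : Set (X → X))) (x : X) :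
    ρ (ρ x) = x := by
  rcases hρ with rfl | rfl
  exacts [rfl, hσ x]

theorem apply_comm_of_mem_pair (hρ : ρ ∈ ({id, σ} : Set (X → X))) (x : X) :
    ρ (σ x) = σ (ρ x) := by
  rcases hρ with rfl | rfl <;> rfl

theorem comp_mem_pair (hσ : Involutive σ) {ρ' : X → X} (hρ : ρ ∈ ({id, σ} : Set (X → X)))
    (hρ' : ρ' ∈ ({id, σ} : Set (X → X))) : ρ' ∘ ρ ∈ ({id, σ} : Set (X → X)) := by
  rcases hρ with rfl | rfl <;> rcases hρ' with rfl | rfl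
  · exact Or.inl rfl
  · exact Or.inr rfl
  · exact Or.inr rfl
  · exact Or.inl (funext hσ)

namespace IsTwist

theorem symm (hσ : Involutive σ) (h : IsTwist σ u v) : IsTwist σ v u := by
  obtain ⟨L, ρ, hρ, h⟩ := h
  exact ⟨L.symm, ρ, hρ, fun x => by rw [h, apply_apply_of_mem_pair hσ hρ, L.symm_apply_apply]⟩

theorem trans (hσ : Involutive σ) (huv : IsTwist σ u v) (hvw : IsTwist σ v w) :
    IsTwist σ u w := by
  obtain ⟨L, ρ, hρ, huv⟩ := huv
  obtain ⟨L', ρ', hρ', hvw⟩ := hvw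
  exact ⟨L'.trans L, ρ' ∘ ρ, comp_mem_pair hσ hρ hρ', fun x => by rw [huv, hvw]; rfl⟩

theorem apply_eq_zero_or (hσ : Involutive σ) (h : IsTwist σ u v) {a : X} (ha : v a = 0) :
    u a = 0 ∨ u (σ a) = 0 := by
  obtain ⟨L, ρ, hρ | hρ, h⟩ := h <;> subst hρ
  · exact Or.inl (by rw [h, id, ha, map_zero])
  · exact Or.inr (by rw [h, hσ, ha, map_zero])

theorem exists_of_norm_lt (h : IsTwist σ u v) {a : X} (hlt : ‖u a‖ < ‖v (σ a)‖) :
    ∃ L : ℂ ≃ₗᵢ[ℝ] ℂ, ∀ x, u x = L (v x) := by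
  obtain ⟨L, ρ, hρ | hρ, h⟩ := h <;> subst hρ
  · exact ⟨L, h⟩
  · rw [h, L.norm_map] at hlt
    exact absurd hlt (lt_irrefl _)

theorem norm_apply_eq {t : ℝ} (h : IsTwist σ u (t • w)) {a : X} (ha : u a = 0)
    (hw : w (σ a) ≠ 0) (x : X) : ‖u x‖ = |t| * ‖w x‖ := by
  rcases eq_or_ne t 0 with rfl | ht
  · obtain ⟨L, ρ, -, h⟩ := h
    simp [h]
  · have hlt : ‖u a‖ < ‖(t • w) (σ a)‖ := by
      simpa [ha, norm_smul] using mul_pos (abs_pos.2 ht) (norm_pos_iff.2 hw)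
    obtain ⟨L, hL⟩ := h.exists_of_norm_lt hlt
    rw [hL, L.norm_map, Pi.smul_apply, norm_smul, Real.norm_eq_abs]

end IsTwist

end Twist

section TwoLocal

variable {X ι : Type*} {σ : X → X} {D c : ι → X → ℂ} {W : X → ℂ} {a : X}

structure IsTwoLocalTwist_s6 (σ : X → X) (D c : ι → X → ℂ) : Prop where
  isTwist : ∀ i, IsTwist σ (D i) (c i)
  isTwist_sub : ∀ i j, IsTwist σ (D i - D j) (c i - c j)

/-- `(z * conj w).im ≠ 0` says that `z` and `w` are `ℝ`-linearly independent. -/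
def IsAnchor (σ : X → X) (W : X → ℂ) (a : X) : Prop :=
  W a = 0 ∧ ∃ m, (W m * conj (W (σ a))).im ≠ 0

namespace IsAnchor

theorem apply_ne_zero (hW : IsAnchor σ W a) : W (σ a) ≠ 0 := by
  obtain ⟨-, m, hm⟩ := hW
  rintro h
  simp [h] at hm

theorem linearIsometryEquiv_comp (hW : IsAnchor σ W a) (L : ℂ ≃ₗᵢ[ℝ] ℂ) :
    IsAnchor σ (L ∘ W) a := by
  obtain ⟨ha, m, hm⟩ := hW
  refine ⟨by simp [ha], m, ?_⟩
  rw [← abs_ne_zero] at hm ⊢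
  simpa only [comp_apply, L.abs_im_apply_mul_conj_apply] using hm

theorem comp (hσ : Involutive σ) (hW : IsAnchor σ W a) {ρ : X → X}
    (hρ : ρ ∈ ({id, σ} : Set (X → X))) : IsAnchor σ (W ∘ ρ) (ρ a) := by
  obtain ⟨ha, m, hm⟩ := hW
  refine ⟨by simp [apply_apply_of_mem_pair hσ hρ, ha], ρ m, ?_⟩
  simpa only [comp_apply, apply_apply_of_mem_pair hσ hρ, ← apply_comm_of_mem_pair hρ] using hm

end IsAnchor

namespace IsTwoLocalTwist_s6

theorem apply_eq_zero_of_eq_smul (hD : IsTwoLocalTwist_s6 σ D c) (hσ : Involutive σ)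
    (hW : IsAnchor σ W a) (hDW : ∃ i, c i = W ∧ D i = W)
    {t : ℝ} {i : ι} (hi : c i = t • W) : D i a = 0 := by
  obtain ⟨j, hcj, hDj⟩ := hDW
  have h₁ := (hD.isTwist i).apply_eq_zero_or hσ (a := a) (by simp [hi, hW.1])
  have h₂ := (hD.isTwist_sub i j).apply_eq_zero_or hσ (a := a) (by simp [hi, hcj, hW.1])
  simp only [hDj, Pi.sub_apply, hW.1, sub_zero, sub_eq_zero] at h₂
  by_contra hne
  exact hW.apply_ne_zero ((h₂.resolve_left hne).symm.trans (h₁.resolve_left hne))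

theorem apply_eq_smul_of_eq_smul (hD : IsTwoLocalTwist_s6 σ D c) (hσ : Involutive σ)
    (hW : IsAnchor σ W a) (hDW : ∃ i, c i = W ∧ D i = W)
    {t : ℝ} {i : ι} (hi : c i = t • W) : D i = t • W := by
  obtain ⟨j, hcj, hDj⟩ := hDW
  have ha := hD.apply_eq_zero_of_eq_smul hσ hW ⟨j, hcj, hDj⟩ hi
  have hsub : c i - c j = (t - 1) • W := by rw [hi, hcj, sub_smul, one_smul]
  funext x
  have hnorm := (hi ▸ hD.isTwist i).norm_apply_eq ha hW.apply_ne_zero x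
  have hnorm_sub := (hsub ▸ hDj ▸ hD.isTwist_sub i j).norm_apply_eq (by simp [ha, hW.1])
    hW.apply_ne_zero x
  exact eq_smul_of_norm_eq_of_norm_sub_eq hnorm hnorm_sub

theorem exists_apply_mul_comm_of_lt (hD : IsTwoLocalTwist_s6 σ D c) (hσ : Involutive σ)
    (hW : IsAnchor σ W a) (hscale : ∀ t : ℝ, ∃ i, c i = t • W) (hDW : ∃ i, c i = W ∧ D i = W)
    (i : ι) {t : ℝ} (ht : (‖D i a‖ + ‖c i (σ a)‖) / ‖W (σ a)‖ < t) :
    ∃ φ ∈ ({RingHom.id ℂ, starRingEnd ℂ} : Set (ℂ →+* ℂ)), ∀ p q,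
      (D i p - t * W p) * φ (c i q - t * W q) = (D i q - t * W q) * φ (c i p - t * W p) := by
  obtain ⟨j, hj⟩ := hscale t
  have h := hj ▸ hD.apply_eq_smul_of_eq_smul hσ hW hDW hj ▸ hD.isTwist_sub i j
  have hlt : ‖D i a‖ < ‖c i (σ a) - t * W (σ a)‖ := by
    rw [div_lt_iff₀ (norm_pos_iff.2 hW.apply_ne_zero)] at ht
    calc ‖D i a‖ < |t| * ‖W (σ a)‖ - ‖c i (σ a)‖ := by
          nlinarith [le_abs_self t, norm_nonneg (W (σ a))]
      _ = ‖t * W (σ a)‖ - ‖c i (σ a)‖ := by rw [norm_mul, norm_real, Real.norm_eq_abs]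
      _ ≤ ‖c i (σ a) - t * W (σ a)‖ := norm_sub_rev (c i (σ a)) _ ▸ norm_sub_norm_le _ _
  obtain ⟨L, hL⟩ := h.exists_of_norm_lt (a := a) (by simpa [hW.1] using hlt)
  obtain ⟨φ, hφ, hLφ⟩ := L.exists_ringHom_apply_mul_comm
  have hL' (x : X) : D i x - t * W x = L (c i x - t * W x) := by simpa using hL x
  exact ⟨φ, hφ, fun p q => by rw [hL' p, hL' q]; exact hLφ _ _⟩

theorem exists_eq_add_smul (hD : IsTwoLocalTwist_s6 σ D c) (hσ : Involutive σ)
    (hW : IsAnchor σ W a) (hscale : ∀ t : ℝ, ∃ i, c i = t • W) (hDW : ∃ i, c i = W ∧ D i = W)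
    (i : ι) : ∃ K : ℂ, D i = c i + K • W := by
  obtain ⟨φ, hφ, hinf⟩ :=
    (Set.Ioi_infinite ((‖D i a‖ + ‖c i (σ a)‖) / ‖W (σ a)‖)).exists_infinite_setOf
      (Set.toFinite _) fun t ht => hD.exists_apply_mul_comm_of_lt hσ hW hscale hDW i ht
  -- cross-multiplying eliminates the unimodular factor, leaving a quadratic polynomial in `t`
  have hcoef (p q : X) := quadratic_eq_zero_of_infinite (hinf.image ofReal_injective.injOn)
    (a := W p * φ (W q) - W q * φ (W p))
    (b := D i q * φ (W p) + W q * φ (c i p) - D i p * φ (W q) - W p * φ (c i q))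
    (c := D i p * φ (c i q) - D i q * φ (c i p)) <| by
      rintro _ ⟨t, ht, rfl⟩
      have h := ht p q
      simp only [map_sub, map_mul, RingHom.map_ofReal_of_mem hφ] at h
      linear_combination h
  have hφid : φ = RingHom.id ℂ := by
    obtain ⟨m, hm⟩ := hW.2
    refine hφ.resolve_right fun hconj => hm (conj_eq_iff_im.1 ?_)
    have h := (hcoef (σ a) m).1
    rw [Set.mem_singleton_iff.1 hconj] at h
    simp only [map_mul, conj_conj]
    linear_combination h
  subst hφid
  refine ⟨(D i (σ a) - c i (σ a)) / W (σ a), funext fun q => ?_⟩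
  have h := (hcoef (σ a) q).2.1
  simp only [RingHom.id_apply] at h
  simp only [Pi.add_apply, Pi.smul_apply, smul_eq_mul]
  field_simp [hW.apply_ne_zero]
  linear_combination h

theorem eq_of_isAnchor (hD : IsTwoLocalTwist_s6 σ D c) (hσ : Involutive σ) (hW : IsAnchor σ W a)
    (hscale : ∀ t : ℝ, ∃ i, c i = t • W) (hscale' : ∀ t : ℝ, ∃ i, c i = t • (W ∘ σ))
    (hDW : ∃ i, c i = W ∧ D i = W) : D = c := by
  have hW' : IsAnchor σ (W ∘ σ) (σ a) := hW.comp hσ (Or.inr rfl)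
  have hDW' : ∃ i, c i = W ∘ σ ∧ D i = W ∘ σ := by
    obtain ⟨j, hj⟩ := hscale' 1
    rw [one_smul] at hj
    obtain ⟨K, hK⟩ := hD.exists_eq_add_smul hσ hW hscale hDW j
    -- `D j a = W (σ a) ≠ 0`, so it is `D j (σ a) = K * W (σ a)` that vanishes
    have h := (hD.isTwist j).apply_eq_zero_or hσ (a := σ a) (by simp [hj, hσ a, hW.1])
    have hK0 : K = 0 := by simpa [hK, hj, hσ a, hW.1, hW.apply_ne_zero] using h
    exact ⟨j, hj, by rw [hK, hj, hK0, zero_smul, add_zero]⟩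
  funext i
  obtain ⟨K, hK⟩ := hD.exists_eq_add_smul hσ hW hscale hDW i
  obtain ⟨K', hK'⟩ := hD.exists_eq_add_smul hσ hW' hscale' hDW' i
  have hKW : K * W (σ a) = 0 := by simpa [hσ a, hW.1] using congrFun (hK.symm.trans hK') (σ a)
  rw [hK, (mul_eq_zero.1 hKW).resolve_right hW.apply_ne_zero, zero_smul, add_zero]

end IsTwoLocalTwist_s6

end TwoLocal

section UnitInterval

theorem contDiff_parabola : ContDiff ℝ 1 fun s : ℝ => (s : ℂ) + (s : ℂ) ^ 2 * I := by
  have h : ContDiff ℝ 1 fun s : ℝ => (s : ℂ) := ofRealCLM.contDiff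
  exact h.add ((h.pow 2).mul contDiff_const)

noncomputable def parabola : C(unitInterval, ℂ) :=
  ⟨fun t => (t : ℂ) + (t : ℂ) ^ 2 * I, by fun_prop⟩

theorem isC1_parabola : IsC1 parabola :=
  ⟨_, contDiff_parabola.contDiffOn, fun _ => rfl⟩

theorem isC1_parabola_comp_symm : IsC1 (parabola.comp ⟨unitInterval.symm, by fun_prop⟩) := by
  have hsymm : ContDiff ℝ 1 fun s : ℝ => 1 - s := contDiff_const.sub contDiff_id
  refine ⟨_, (contDiff_parabola.comp hsymm).contDiffOn, fun t => ?_⟩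
  simp [parabola, unitInterval.coe_symm_eq]

theorem isAnchor_parabola : IsAnchor unitInterval.symm parabola 0 := by
  refine ⟨by simp [parabola], ⟨1 / 2, by norm_num, by norm_num⟩, ?_⟩
  norm_num [parabola]

theorem coe_mem_pair_of_mem_Pi0 {π : unitInterval ≃ₜ unitInterval} (hπ : π ∈ Pi0) :
    ⇑π ∈ ({id, unitInterval.symm} : Set (unitInterval → unitInterval)) := by
  rcases hπ with rfl | rfl
  exacts [Or.inl rfl, Or.inr rfl]

noncomputable def smulEpowLIE {α : ℂ} (hα : ‖α‖ = 1) (ε : ℤ) : ℂ ≃ₗᵢ[ℝ] ℂ :=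
  (if ε = 1 then LinearIsometryEquiv.refl ℝ ℂ else conjLIE).trans
    (rotation ⟨α, mem_sphere_zero_iff_norm.2 hα⟩)

theorem smul_epow_comp_apply {X : Type*} [TopologicalSpace X] {α : ℂ} (hα : ‖α‖ = 1) (ε : ℤ)
    (f : C(X, ℂ)) (π : C(X, X)) (x : X) :
    (α • epow ε (f.comp π)) x = smulEpowLIE hα ε (f (π x)) := by
  by_cases h : ε = 1 <;> simp [epow, smulEpowLIE, h] <;> rfl

theorem isTwist_smul_epow_comp_sub {α : ℂ} (hα : ‖α‖ = 1) {π : unitInterval ≃ₜ unitInterval}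
    (hπ : π ∈ Pi0) (ε : ℤ) (f g : C(unitInterval, ℂ)) :
    IsTwist unitInterval.symm
      (⇑(α • epow ε (f.comp π)) - ⇑(α • epow ε (g.comp π))) (⇑f - ⇑g) :=
  ⟨smulEpowLIE hα ε, π, coe_mem_pair_of_mem_Pi0 hπ, fun x => by
    rw [Pi.sub_apply, Pi.sub_apply, smul_epow_comp_apply hα, smul_epow_comp_apply hα, map_sub]
    rfl⟩

theorem eq_add_smul_epow_comp {A : Submodule ℂ C(unitInterval, ℂ)} (hC1 : ∀ f, IsC1 f → f ∈ A)
    (E : A → C(unitInterval, ℂ))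
    (hE : ∀ f g : A, IsTwist unitInterval.symm (⇑(E f) - ⇑(E g))
      (⇑(f : C(unitInterval, ℂ)) - ⇑(g : C(unitInterval, ℂ))))
    {α : ℂ} (hα : ‖α‖ = 1) {π : unitInterval ≃ₜ unitInterval} (hπ : π ∈ Pi0) (ε : ℤ)
    (hP : E ⟨parabola, hC1 _ isC1_parabola⟩ - E 0 = α • epow ε (parabola.comp π)) (f : A) :
    E f = E 0 + α • epow ε ((f : C(unitInterval, ℂ)).comp π) := by
  have hσ := unitInterval.symm_involutive
  set L := smulEpowLIE hα ε
  set c : A → unitInterval → ℂ := fun f => ⇑(α • epow ε ((f : C(unitInterval, ℂ)).comp π))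
  have hc (f : A) (x) : c f x = L ((f : C(unitInterval, ℂ)) (π x)) :=
    smul_epow_comp_apply hα ε _ _ x
  have hc0 : c 0 = 0 := funext fun x => by simp [hc]
  have hD : IsTwoLocalTwist_s6 unitInterval.symm (fun f => ⇑(E f) - ⇑(E 0)) c := by
    have hsub (f g : A) :
        IsTwist unitInterval.symm ((⇑(E f) - ⇑(E 0)) - (⇑(E g) - ⇑(E 0))) (c f - c g) := by
      rw [sub_sub_sub_cancel_right]
      exact (hE f g).trans hσ ((isTwist_smul_epow_comp_sub hα hπ ε f g).symm hσ)
    exact ⟨fun f => by simpa [hc0] using hsub f 0, hsub⟩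
  set P : A := ⟨parabola, hC1 _ isC1_parabola⟩
  set Q : A := ⟨parabola.comp ⟨unitInterval.symm, by fun_prop⟩, hC1 _ isC1_parabola_comp_symm⟩
  have hW : IsAnchor unitInterval.symm (c P) (π 0) := by
    rw [show c P = (L ∘ parabola) ∘ π from funext (hc P)]
    exact (isAnchor_parabola.linearIsometryEquiv_comp L).comp hσ (coe_mem_pair_of_mem_Pi0 hπ)
  have hscale (t : ℝ) : ∃ f, c f = t • c P :=
    ⟨(t : ℂ) • P, funext fun x => by
      rw [hc, Pi.smul_apply, hc, ← L.map_smul, real_smul]; rfl⟩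
  have hscale' (t : ℝ) : ∃ f, c f = t • (c P ∘ unitInterval.symm) :=
    ⟨(t : ℂ) • Q, funext fun x => by
      rw [hc, Pi.smul_apply, comp_apply, hc, ← L.map_smul, real_smul,
        apply_comm_of_mem_pair (coe_mem_pair_of_mem_Pi0 hπ)]; rfl⟩
  have hDW : ∃ f, c f = c P ∧ ⇑(E f) - ⇑(E 0) = c P :=
    ⟨P, rfl, by rw [← ContinuousMap.coe_sub, hP]⟩
  have hEc := congrFun (congrFun (hD.eq_of_isAnchor hσ hW hscale hscale' hDW) f)
  ext x
  rw [ContinuousMap.add_apply, ← sub_eq_iff_eq_add']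
  exact hEc x

end UnitInterval

theorem stmt_6_general
    (A1 A2 : Submodule ℂ C(unitInterval, ℂ))
    -- `A_j` contains `C¹[0,1]`
    (hC1A1 : ∀ f : C(unitInterval, ℂ), IsC1 f → f ∈ A1)
    -- the norms on `A_j`
    (N1 N2 : C(unitInterval, ℂ) → ℝ)
    (T : A1 → A2)
    -- `T` is 2-local in `G_{Π₀}(A₁,A₂) ∩ Iso(A₁,A₂)`
    (h2loc : ∀ f g : A1, ∃ S : A1 → A2,
      ((∃ lam : A2, ∃ α : ℂ, ‖α‖ = 1 ∧ ∃ π ∈ Pi0, ∃ ε ∈ ({1, -1} : Set ℤ),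
          ∀ h : A1, (S h : C(unitInterval, ℂ)) =
            (lam : C(unitInterval, ℂ)) +
              α • epow ε ((h : C(unitInterval, ℂ)).comp (π : C(unitInterval, unitInterval)))) ∧
        (Function.Surjective S ∧
          ∀ u v : A1, N2 ((S u : C(unitInterval, ℂ)) - (S v : C(unitInterval, ℂ)))
            = N1 ((u : C(unitInterval, ℂ)) - (v : C(unitInterval, ℂ))))) ∧
      T f = S f ∧ T g = S g) :
    -- `T ∈ G_{Π₀}(A₁,A₂)`
    (∃ lam : A2, ∃ α : ℂ, ‖α‖ = 1 ∧ ∃ π ∈ Pi0, ∃ ε ∈ ({1, -1} : Set ℤ),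
      ∀ h : A1, (T h : C(unitInterval, ℂ)) =
        (lam : C(unitInterval, ℂ)) +
          α • epow ε ((h : C(unitInterval, ℂ)).comp (π : C(unitInterval, unitInterval)))) ∧
    -- `T ∈ Iso(A₁,A₂)`
    (Function.Surjective T ∧
      ∀ u v : A1, N2 ((T u : C(unitInterval, ℂ)) - (T v : C(unitInterval, ℂ)))
        = N1 ((u : C(unitInterval, ℂ)) - (v : C(unitInterval, ℂ)))) ∧
    -- the form of `T`
    (∃ α : ℂ, ‖α‖ = 1 ∧ ∃ π ∈ Pi0, ∃ ε ∈ ({1, -1} : Set ℤ),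
      ∀ f : A1, (T f : C(unitInterval, ℂ)) =
        (T 0 : C(unitInterval, ℂ)) +
          α • epow ε ((f : C(unitInterval, ℂ)).comp (π : C(unitInterval, unitInterval)))) := by
  have hE (f g : A1) : IsTwist unitInterval.symm
      (⇑(T f : C(unitInterval, ℂ)) - ⇑(T g : C(unitInterval, ℂ)))
      (⇑(f : C(unitInterval, ℂ)) - ⇑(g : C(unitInterval, ℂ))) := by
    obtain ⟨S, ⟨⟨lam, α, hα, π, hπ, ε, -, hS⟩, -⟩, hTf, hTg⟩ := h2loc f g
    rw [hTf, hTg, hS, hS, ContinuousMap.coe_add, ContinuousMap.coe_add, add_sub_add_left_eq_sub]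
    exact isTwist_smul_epow_comp_sub hα hπ ε f g
  obtain ⟨S, ⟨⟨lam, α, hα, π, hπ, ε, hε, hS⟩, hsurj, hiso⟩, hTP, hT0⟩ :=
    h2loc ⟨parabola, hC1A1 _ isC1_parabola⟩ 0
  have hlam : (T 0 : C(unitInterval, ℂ)) = lam := by ext x; simp [hT0, hS, epow]
  have hT := eq_add_smul_epow_comp hC1A1 (fun f => (T f : C(unitInterval, ℂ))) hE hα hπ ε
    (by ext x; simp [hTP, hT0, hS, epow])
  obtain rfl : T = S := funext fun f => Subtype.ext (by rw [hT, hlam, hS])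
  exact ⟨⟨lam, α, hα, π, hπ, ε, hε, hS⟩, ⟨hsurj, hiso⟩, α, hα, π, hπ, ε, hε, hT⟩

/-- `G_{Π₀}(A₁,A₂) ∩ Iso(A₁,A₂)` is 2-local reflexive in `M(A₁,A₂)`: every map
`T : A₁ → A₂` that is 2-local in `G_{Π₀}(A₁,A₂) ∩ Iso(A₁,A₂)` belongs to
`G_{Π₀}(A₁,A₂) ∩ Iso(A₁,A₂)`; in particular `T` is a surjective isometry of the form
`T(f) = T(0) + α·[f ∘ π]^ε`. -/
theorem stmt_6
    (A1 A2 : Submodule ℂ C(unitInterval, ℂ))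
    -- `A_j` contains `C¹[0,1]`
    (hC1A1 : ∀ f : C(unitInterval, ℂ), IsC1 f → f ∈ A1)
    (hC1A2 : ∀ f : C(unitInterval, ℂ), IsC1 f → f ∈ A2)
    -- `A_j` is conjugate closed
    (hstar1 : ∀ f ∈ A1, star f ∈ A1)
    (hstar2 : ∀ f ∈ A2, star f ∈ A2)
    -- the norms on `A_j`
    (N1 N2 : C(unitInterval, ℂ) → ℝ)
    (hN1add : ∀ f ∈ A1, ∀ g ∈ A1, N1 (f + g) ≤ N1 f + N1 g)
    (hN1smul : ∀ (c : ℂ), ∀ f ∈ A1, N1 (c • f) = ‖c‖ * N1 f)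
    (hN1eq0 : ∀ f ∈ A1, (N1 f = 0 ↔ f = 0))
    (hN1const : ∀ c : ℂ, N1 (ContinuousMap.const unitInterval c) = ‖c‖)
    (hN1star : ∀ f ∈ A1, N1 (star f) = N1 f)
    (hN2add : ∀ f ∈ A2, ∀ g ∈ A2, N2 (f + g) ≤ N2 f + N2 g)
    (hN2smul : ∀ (c : ℂ), ∀ f ∈ A2, N2 (c • f) = ‖c‖ * N2 f)
    (hN2eq0 : ∀ f ∈ A2, (N2 f = 0 ↔ f = 0))
    (hN2const : ∀ c : ℂ, N2 (ContinuousMap.const unitInterval c) = ‖c‖)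
    (hN2star : ∀ f ∈ A2, N2 (star f) = N2 f)
    (T : A1 → A2)
    -- `T` is 2-local in `G_{Π₀}(A₁,A₂) ∩ Iso(A₁,A₂)`
    (h2loc : ∀ f g : A1, ∃ S : A1 → A2,
      ((∃ lam : A2, ∃ α : ℂ, ‖α‖ = 1 ∧ ∃ π ∈ Pi0, ∃ ε ∈ ({1, -1} : Set ℤ),
          ∀ h : A1, (S h : C(unitInterval, ℂ)) =
            (lam : C(unitInterval, ℂ)) +
              α • epow ε ((h : C(unitInterval, ℂ)).comp (π : C(unitInterval, unitInterval)))) ∧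
        (Function.Surjective S ∧
          ∀ u v : A1, N2 ((S u : C(unitInterval, ℂ)) - (S v : C(unitInterval, ℂ)))
            = N1 ((u : C(unitInterval, ℂ)) - (v : C(unitInterval, ℂ))))) ∧
      T f = S f ∧ T g = S g) :
    -- `T ∈ G_{Π₀}(A₁,A₂)`
    (∃ lam : A2, ∃ α : ℂ, ‖α‖ = 1 ∧ ∃ π ∈ Pi0, ∃ ε ∈ ({1, -1} : Set ℤ),
      ∀ h : A1, (T h : C(unitInterval, ℂ)) =
        (lam : C(unitInterval, ℂ)) +
          α • epow ε ((h : C(unitInterval, ℂ)).comp (π : C(unitInterval, unitInterval)))) ∧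
    -- `T ∈ Iso(A₁,A₂)`
    (Function.Surjective T ∧
      ∀ u v : A1, N2 ((T u : C(unitInterval, ℂ)) - (T v : C(unitInterval, ℂ)))
        = N1 ((u : C(unitInterval, ℂ)) - (v : C(unitInterval, ℂ)))) ∧
    -- the form of `T`
    (∃ α : ℂ, ‖α‖ = 1 ∧ ∃ π ∈ Pi0, ∃ ε ∈ ({1, -1} : Set ℤ),
      ∀ f : A1, (T f : C(unitInterval, ℂ)) =
        (T 0 : C(unitInterval, ℂ)) +
          α • epow ε ((f : C(unitInterval, ℂ)).comp (π : C(unitInterval, unitInterval)))) :=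
  stmt_6_general A1 A2 hC1A1 N1 N2 T h2loc
end
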